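/- The weighted conjunction aggregator ⊗^∧(w, x) = minᵢ { ((1/2 − w̄ᵢ)·sign(xᵢ) + 1/2)·xᵢ }, where w̄ᵢ = wᵢ/∑ⱼ wⱼ, satisfies min(x)·⊗^∧(w, x) > 0 for every nonzero x ∈ ℝ^N all of whose entries are nonzero, provided all weights wᵢ > 0 and N ≥ 2 (so that 0 < w̄ᵢ < 1). -/
import Mathlib


/-- Weighted conjunction aggregator. -/
noncomputable def otimes (N : ℕ) (hN : 0 < N) (w x : Fin N → ℝ) : ℝ :=
  Finset.univ.inf' ⟨⟨0, hN⟩, Finset.mem_univ _⟩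
    (fun i => ((1 / 2 - w i / ∑ j, w j) * Real.sign (x i) + 1 / 2) * x i)

theorem otimes_same_sign_as_min (N : ℕ) (hN : 2 ≤ N) (w x : Fin N → ℝ)
    (hw : ∀ i, 0 < w i) (hx : ∀ i, x i ≠ 0) :
    (Finset.univ.inf' ⟨⟨0, by omega⟩, Finset.mem_univ _⟩ x) *
      otimes N (by omega) w x > 0 := by
  have hNpos : 0 < N := by omega
  set S := ∑ j, w j with hS
  have hSpos : 0 < S := Finset.sum_pos (fun i _ => hw i) ⟨⟨0, hNpos⟩, Finset.mem_univ _⟩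
  have hwbar : ∀ i, 0 < w i / S ∧ w i / S < 1 := by
    intro i
    constructor
    · exact div_pos (hw i) hSpos
    · rw [div_lt_one hSpos]
      have : Nontrivial (Fin N) := Fin.nontrivial_iff_two_le.mpr hN
      obtain ⟨j, hj⟩ := exists_ne i
      calc w i = ∑ k ∈ {i}, w k := by simp
        _ < S := by
          apply Finset.sum_lt_sum_of_subset (Finset.subset_univ _) (Finset.mem_univ j)
            (by simp [hj]) (hw j)
          intro k _ _; exact (hw k).le
  set f := fun i => ((1 / 2 - w i / S) * Real.sign (x i) + 1 / 2) * x i with hf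
  have key : ∀ i, (0 < x i → 0 < f i) ∧ (x i < 0 → f i < 0) := by
    intro i
    obtain ⟨h0, h1⟩ := hwbar i
    constructor
    · intro hxi
      have : Real.sign (x i) = 1 := Real.sign_of_pos hxi
      simp only [hf, this]
      nlinarith
    · intro hxi
      have : Real.sign (x i) = -1 := Real.sign_of_neg hxi
      simp only [hf, this]
      nlinarith
  have hne : (Finset.univ : Finset (Fin N)).Nonempty := ⟨⟨0, hNpos⟩, Finset.mem_univ _⟩
  obtain ⟨i0, _, hi0⟩ := Finset.exists_mem_eq_inf' hne x
  show Finset.univ.inf' hne x * Finset.univ.inf' hne f > 0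
  rcases (hx i0).lt_or_gt with hneg | hpos
  · have h1 : Finset.univ.inf' hne x < 0 := by rw [hi0]; exact hneg
    have h2 : Finset.univ.inf' hne f < 0 :=
      lt_of_le_of_lt (Finset.inf'_le _ (Finset.mem_univ i0)) ((key i0).2 hneg)
    exact mul_pos_of_neg_of_neg h1 h2
  · have h1 : 0 < Finset.univ.inf' hne x := by rw [hi0]; exact hpos
    have h2 : 0 < Finset.univ.inf' hne f := by
      rw [Finset.lt_inf'_iff]
      intro i _
      rcases (hx i).lt_or_gt with hni | hpi
      · exfalso
        have := Finset.inf'_le x (Finset.mem_univ i)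
        linarith
      · exact (key i).1 hpi
    exact mul_pos h1 h2
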